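/- (Lemma 1, action property.) The map Φ is a right group action of the VI-SLAM group G on SE(3) × ℝ³ × (ℝ³)ⁿ: Φ of the group identity fixes every state, and Φ((A¹,w¹,Q¹ᵢ)·(A²,w²,Q²ᵢ), (P,v,pᵢ)) = Φ((A²,w²,Q²ᵢ), Φ((A¹,w¹,Q¹ᵢ), (P,v,pᵢ))) for all group elements and all states. -/

import Mathlib

open scoped InnerProductSpace Matrix

noncomputable section

/-- Vectors in ℝ³ with the Euclidean norm. -/
abbrev V3 := EuclideanSpace ℝ (Fin 3)

abbrev Mat3 := Matrix (Fin 3) (Fin 3) ℝ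

/-- `R ∈ SO(3)` iff `RᵀR = I` and `det R = 1`. -/
def SO3 (R : Mat3) : Prop := R.transpose * R = 1 ∧ R.det = 1

/-- Matrix-vector multiplication. -/
def mv (M : Mat3) (q : V3) : V3 := WithLp.toLp 2 (M.mulVec q)

/-- The standard gravity direction `e₃ = (0,0,1)`. -/
def e3 : V3 := WithLp.toLp 2 ![0, 0, 1]

/-- Elements of SE(3) are pairs `(R, x)`. -/
abbrev SE3 := Mat3 × V3

/-- SE(3) group product: `(R₁,x₁)·(R₂,x₂) = (R₁R₂, x₁ + R₁x₂)`. -/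
def seMul (P Q : SE3) : SE3 := (P.1 * Q.1, P.2 + mv P.1 Q.2)

/-- SE(3) identity `(I, 0)`. -/
def seId : SE3 := (1, 0)

/-- SE(3) inverse: `P⁻¹ = (Rᵀ, −Rᵀx)`. -/
def seInv (P : SE3) : SE3 := (P.1ᵀ, -(mv P.1ᵀ P.2))

/-- Action of SE(3) on ℝ³: `P(q) = R_P q + x_P`. -/
def seAct (P : SE3) (q : V3) : V3 := mv P.1 q + P.2

/-- The subgroup `SE_{e₃}(3) = {(R,x) ∈ SE(3) : R e₃ = e₃}`. -/
def SEe3 : Set SE3 := {S | SO3 S.1 ∧ mv S.1 e3 = e3}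

/-- Elements of SOT(3) are pairs `(R_Q, c_Q)`. -/
abbrev SOT3 := Mat3 × ℝ

/-- SOT(3) product `(R₁,c₁)·(R₂,c₂) = (R₁R₂, c₁c₂)`. -/
def sotMul (Q1 Q2 : SOT3) : SOT3 := (Q1.1 * Q2.1, Q1.2 * Q2.2)

/-- SOT(3) inverse `(R_Qᵀ, c_Q⁻¹)`. -/
def sotInv (Q : SOT3) : SOT3 := (Q.1ᵀ, Q.2⁻¹)

/-- Action of SOT(3) on ℝ³: `Q(q) = c_Q R_Q q`. -/
def sotAct (Q : SOT3) (q : V3) : V3 := Q.2 • mv Q.1 q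

/-- Elements of the VI-SLAM group `G = SE₂(3) × SOT(3)ⁿ`. -/
abbrev GVI (n : ℕ) := SE3 × V3 × (Fin n → SOT3)

/-- VI-SLAM group product. -/
def gMul {n : ℕ} (X Y : GVI n) : GVI n :=
  (seMul X.1 Y.1, X.2.1 + mv X.1.1 Y.2.1, fun i => sotMul (X.2.2 i) (Y.2.2 i))

/-- VI-SLAM group identity `(I₄, 0, (I,1)ᵢ)`. -/
def gId {n : ℕ} : GVI n := (seId, 0, fun _ => (1, 1))

/-- VI-SLAM group inverse `(A⁻¹, −R_Aᵀw, Qᵢ⁻¹)`. -/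
def gInv {n : ℕ} (X : GVI n) : GVI n :=
  (seInv X.1, -(mv X.1.1ᵀ X.2.1), fun i => sotInv (X.2.2 i))

/-- Membership in the VI-SLAM group: rotation parts in SO(3), scale parts positive. -/
def gMem {n : ℕ} (X : GVI n) : Prop :=
  SO3 X.1.1 ∧ ∀ i, SO3 (X.2.2 i).1 ∧ 0 < (X.2.2 i).2

/-- The action `Φ((A, w, Qᵢ), (P, v, pᵢ)) = (PA, R_Aᵀ(v − w), (P A T_C)(Qᵢ⁻¹((P T_C)⁻¹(pᵢ))))`. -/
def Phi {n : ℕ} (TC : SE3) (X : GVI n) (ξ : SE3 × V3 × (Fin n → V3)) :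
    SE3 × V3 × (Fin n → V3) :=
  (seMul ξ.1 X.1, mv X.1.1ᵀ (ξ.2.1 - X.2.1),
    fun i => seAct (seMul (seMul ξ.1 X.1) TC)
      (sotAct (sotInv (X.2.2 i)) (seAct (seInv (seMul ξ.1 TC)) (ξ.2.2 i))))

/-!
The pose components of `Φ` compose by associativity of the SE(3) product, the velocity
components because `R_{A¹}ᵀ R_{A¹} = I`. In the landmark
component, `Φ` by `(A¹, w¹, Q¹ᵢ)` leaves `pᵢ` expressed through the frame `P A¹ T_C`, and `Φ` by
`(A², w², Q²ᵢ)` begins by applying `(P A¹ T_C)⁻¹`; since all rotation parts are orthogonal these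
cancel, and what remains is `(Q¹ᵢ Q²ᵢ)⁻¹ = (Q²ᵢ)⁻¹ (Q¹ᵢ)⁻¹`.
-/

lemma mv_eq_toLpLin (M : Mat3) (q : V3) : mv M q = Matrix.toLpLin 2 2 M q :=
  (Matrix.toLpLin_apply 2 2 M q).symm

lemma mv_add (M : Mat3) (q r : V3) : mv M (q + r) = mv M q + mv M r := by
  simp only [mv_eq_toLpLin, map_add]

lemma mv_sub (M : Mat3) (q r : V3) : mv M (q - r) = mv M q - mv M r := by
  simp only [mv_eq_toLpLin, map_sub]

lemma mv_smul (M : Mat3) (c : ℝ) (q : V3) : mv M (c • q) = c • mv M q := by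
  simp only [mv_eq_toLpLin, map_smul]

lemma mv_neg (M : Mat3) (q : V3) : mv M (-q) = -mv M q := by
  simp only [mv_eq_toLpLin, map_neg]

lemma mv_zero (M : Mat3) : mv M 0 = 0 := by
  simp only [mv_eq_toLpLin, map_zero]

lemma mv_one (q : V3) : mv 1 q = q := by
  simp [mv]

lemma mv_mul (M N : Mat3) (q : V3) : mv (M * N) q = mv M (mv N q) := by
  simp [mv, Matrix.mulVec_mulVec]

lemma mv_transpose_mv {R : Mat3} (hR : Rᵀ * R = 1) (q : V3) : mv Rᵀ (mv R q) = q := by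
  rw [← mv_mul, hR, mv_one]

lemma mv_mv_transpose {R : Mat3} (hR : Rᵀ * R = 1) (q : V3) : mv R (mv Rᵀ q) = q := by
  rw [← mv_mul, mul_eq_one_comm.mp hR, mv_one]

lemma transpose_mul_self_mul {R S : Mat3} (hR : Rᵀ * R = 1) (hS : Sᵀ * S = 1) :
    (R * S)ᵀ * (R * S) = 1 := by
  rw [Matrix.transpose_mul, Matrix.mul_assoc, ← Matrix.mul_assoc Rᵀ, hR, Matrix.one_mul, hS]

lemma seMul_seId (P : SE3) : seMul P seId = P := by
  simp [seMul, seId, mv_zero]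

lemma seMul_assoc (P Q S : SE3) : seMul (seMul P Q) S = seMul P (seMul Q S) := by
  simp [seMul, Matrix.mul_assoc, mv_mul, mv_add, add_assoc]

lemma seAct_seInv (S : SE3) (q : V3) : seAct (seInv S) q = mv S.1ᵀ (q - S.2) := by
  simp [seAct, seInv, sub_eq_add_neg, mv_add, mv_neg]

lemma seAct_seInv_seAct {S : SE3} (hS : S.1ᵀ * S.1 = 1) (q : V3) :
    seAct (seInv S) (seAct S q) = q := by
  rw [seAct_seInv, seAct, add_sub_cancel_right, mv_transpose_mv hS]

lemma seAct_seAct_seInv {S : SE3} (hS : S.1ᵀ * S.1 = 1) (q : V3) :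
    seAct S (seAct (seInv S) q) = q := by
  rw [seAct_seInv, seAct, mv_mv_transpose hS, sub_add_cancel]

lemma sotAct_sotInv_one (q : V3) : sotAct (sotInv (1, 1)) q = q := by
  simp [sotAct, sotInv, mv_one]

lemma sotAct_sotInv_sotMul (Q₁ Q₂ : SOT3) (q : V3) :
    sotAct (sotInv (sotMul Q₁ Q₂)) q = sotAct (sotInv Q₂) (sotAct (sotInv Q₁) q) := by
  simp only [sotAct, sotInv, sotMul, Matrix.transpose_mul, mv_mul, mv_smul, mul_inv, smul_smul,
    mul_comm]

section Phi

variable {n : ℕ} {TC : SE3}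

lemma Phi_gId (hTC : TC.1ᵀ * TC.1 = 1) {ξ : SE3 × V3 × (Fin n → V3)} (hP : ξ.1.1ᵀ * ξ.1.1 = 1) : Phi TC gId ξ = ξ := by
  obtain ⟨P, v, p⟩ := ξ
  refine Prod.ext (seMul_seId P) (Prod.ext ?_ (funext fun i => ?_))
  · simp [Phi, gId, seId, mv_one]
  · simp only [Phi, gId, seMul_seId, sotAct_sotInv_one]
    exact seAct_seAct_seInv (transpose_mul_self_mul hP hTC) (p i)

lemma Phi_gMul (hTC : TC.1ᵀ * TC.1 = 1) {X : GVI n} (hA : X.1.1ᵀ * X.1.1 = 1) (Y : GVI n)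
    {ξ : SE3 × V3 × (Fin n → V3)} (hP : ξ.1.1ᵀ * ξ.1.1 = 1) :
    Phi TC (gMul X Y) ξ = Phi TC Y (Phi TC X ξ) := by
  obtain ⟨A₁, w₁, Q₁⟩ := X
  obtain ⟨A₂, w₂, Q₂⟩ := Y
  obtain ⟨P, v, p⟩ := ξ
  refine Prod.ext (seMul_assoc P A₁ A₂).symm (Prod.ext ?_ (funext fun i => ?_))
  · show mv (A₁.1 * A₂.1)ᵀ (v - (w₁ + mv A₁.1 w₂)) = mv A₂.1ᵀ (mv A₁.1ᵀ (v - w₁) - w₂)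
    rw [Matrix.transpose_mul, mv_mul, sub_add_eq_sub_sub, mv_sub A₁.1ᵀ _ (mv A₁.1 w₂),
      mv_transpose_mv hA]
  · have hPA₁TC : (seMul (seMul P A₁) TC).1ᵀ * (seMul (seMul P A₁) TC).1 = 1 :=
      transpose_mul_self_mul (transpose_mul_self_mul hP hA) hTC
    simp only [Phi, gMul, seAct_seInv_seAct hPA₁TC, sotAct_sotInv_sotMul, seMul_assoc P A₁ A₂]

end Phi

theorem Phi_is_right_action_general (n : ℕ) (TC : SE3) (hTC : SO3 TC.1) :
    (∀ ξ : SE3 × V3 × (Fin n → V3), SO3 ξ.1.1 → Phi TC gId ξ = ξ) ∧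
    (∀ X Y : GVI n, gMem X → gMem Y →
      ∀ ξ : SE3 × V3 × (Fin n → V3), SO3 ξ.1.1 →
        Phi TC (gMul X Y) ξ = Phi TC Y (Phi TC X ξ)) :=
  ⟨fun _ hP => Phi_gId hTC.1 hP.1, fun _ Y hX _ _ hP => Phi_gMul hTC.1 hX.1.1 Y hP.1⟩

/-- (Lemma 1, action property.) `Φ` is a right group action of the
VI-SLAM group on `SE(3) × ℝ³ × (ℝ³)ⁿ`. -/
theorem Phi_is_right_action (n : ℕ) (hn : 1 ≤ n) (TC : SE3) (hTC : SO3 TC.1) :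
    (∀ ξ : SE3 × V3 × (Fin n → V3), SO3 ξ.1.1 → Phi TC gId ξ = ξ) ∧
    (∀ X Y : GVI n, gMem X → gMem Y →
      ∀ ξ : SE3 × V3 × (Fin n → V3), SO3 ξ.1.1 →
        Phi TC (gMul X Y) ξ = Phi TC Y (Phi TC X ξ)) :=
  Phi_is_right_action_general n TC hTC
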